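/- arXiv:math/0607304 — 7 statements merged into one kernel-verified Lean document; each statement's English description precedes it below -/
import Mathlib

section
/- Let ρ be a K-quasi-metric on Z with K ≤ 2. Then for every finite sequence z = z_0, z_1, …, z_{k+1} = z' in Z, ρ(z,z') ≤ K·(ρ(z_0,z_1) + 2·Σ_{i=1}^{k-1} ρ(z_i,z_{i+1}) + ρ(z_k,z_{k+1})). -/
/-- A `K`-quasi-metric on a set `Z`: nonnegative, vanishing exactly on the
diagonal, symmetric, and satisfying `ρ(z,z'') ≤ K·max{ρ(z,z'), ρ(z',z'')}`. -/
def IsQuasiMetric {Z : Type*} (K : ℝ) (ρ : Z → Z → ℝ) : Prop :=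
  (∀ z z', 0 ≤ ρ z z') ∧ (∀ z z', ρ z z' = 0 ↔ z = z') ∧
  (∀ z z', ρ z z' = ρ z' z) ∧
  ∀ z z' z'', ρ z z'' ≤ K * max (ρ z z') (ρ z' z'')

/-- Auxiliary: existence of a balanced splitting index. -/
lemma chain_split_exists (T : ℝ) (Pre : ℕ → ℝ) (k : ℕ) (hk : 1 ≤ k) :
    ∃ m, 1 ≤ m ∧ m ≤ k ∧ (2 ≤ m → Pre (m - 1) ≤ T / 2) ∧
      (m < k → T / 2 < Pre m) := by
  classical
  set Q : ℕ → Prop := fun j => 2 ≤ j ∧ Pre (j - 1) ≤ T / 2 with hQ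
  refine ⟨max (Nat.findGreatest Q k) 1, le_max_right _ _, ?_, ?_, ?_⟩
  · have := Nat.findGreatest_le (P := Q) (n := k)
    omega
  · intro h2
    have hmfg : max (Nat.findGreatest Q k) 1 = Nat.findGreatest Q k := by omega
    rw [hmfg] at h2 ⊢
    have hQm : Q (Nat.findGreatest Q k) :=
      Nat.findGreatest_of_ne_zero rfl (by omega)
    exact hQm.2
  · intro hlt
    have hfg : Nat.findGreatest Q k ≤ max (Nat.findGreatest Q k) 1 := le_max_left _ _
    have hnQ : ¬ Q (max (Nat.findGreatest Q k) 1 + 1) :=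
      Nat.findGreatest_is_greatest (n := k) (by omega) (by omega)
    simp only [hQ] at hnQ
    push_neg at hnQ
    have := hnQ (by omega)
    simpa using this

/-- For a `K`-quasi-metric with `K ≤ 2` and any finite sequence
`z = z_0, …, z_{k+1} = z'`,
`ρ(z,z') ≤ K (ρ(z_0,z_1) + 2 Σ_{i=1}^{k-1} ρ(z_i,z_{i+1}) + ρ(z_k,z_{k+1}))`. -/
theorem chain_key_estimate {Z : Type*} (K : ℝ) (ρ : Z → Z → ℝ)
    (h : IsQuasiMetric K ρ) (hK1 : 1 ≤ K) (hK : K ≤ 2) :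
    ∀ (k : ℕ) (f : ℕ → Z),
      ρ (f 0) (f (k + 1)) ≤
        K * (ρ (f 0) (f 1) + 2 * ∑ i ∈ Finset.Ico 1 k, ρ (f i) (f (i + 1))
          + ρ (f k) (f (k + 1))) := by
  classical
  obtain ⟨hnn, -, -, htri⟩ := h
  intro k
  induction k using Nat.strong_induction_on with
  | _ k IH =>
  intro f
  have hρnn : ∀ i : ℕ, 0 ≤ ρ (f i) (f (i + 1)) := fun i => hnn _ _
  have hsumnn : ∀ a b : ℕ, 0 ≤ ∑ i ∈ Finset.Ico a b, ρ (f i) (f (i + 1)) :=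
    fun a b => Finset.sum_nonneg fun i _ => hρnn i
  rcases Nat.eq_zero_or_pos k with hk0 | hkpos
  · subst hk0
    have he : (Finset.Ico 1 0 : Finset ℕ) = ∅ := rfl
    rw [he, Finset.sum_empty]
    nlinarith [hnn (f 0) (f 1)]
  -- Pre j : the RHS bound for the chain z_0 .. z_{j+1}
  set Pre : ℕ → ℝ := fun j =>
    ρ (f 0) (f 1) + 2 * ∑ i ∈ Finset.Ico 1 j, ρ (f i) (f (i + 1))
      + ρ (f j) (f (j + 1)) with hPre
  clear_value Pre
  have hPrenn : ∀ j, 0 ≤ Pre j := by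
    intro j
    rw [hPre]
    have := hsumnn 1 j
    have := hρnn 0
    have := hρnn j
    dsimp only
    linarith
  have hTnn : 0 ≤ Pre k := hPrenn k
  obtain ⟨m, hm1, hmk, hQm, hQmax⟩ := chain_split_exists (Pre k) Pre k hkpos
  -- prefix estimate
  have hpref : ρ (f 0) (f m) ≤ Pre k := by
    rcases eq_or_lt_of_le hm1 with hm1' | hm2
    · -- m = 1
      rw [← hm1']
      have hsplit := hsumnn 1 k
      have := hρnn k
      have h0 := hρnn 0
      rw [hPre]
      dsimp only
      linarith
    · -- 2 ≤ m
      have hPm : Pre (m - 1) ≤ Pre k / 2 := hQm hm2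
      have hIH := IH (m - 1) (by omega) f
      have hrw : m - 1 + 1 = m := by omega
      rw [hrw] at hIH
      have hle : ρ (f 0) (f m) ≤ K * Pre (m - 1) := by
        rw [hPre]
        dsimp only
        rw [hrw]
        exact hIH
      have hP0 : 0 ≤ Pre (m - 1) := hPrenn _
      have : K * Pre (m - 1) ≤ 2 * Pre (m - 1) :=
        mul_le_mul_of_nonneg_right hK hP0
      linarith
  -- suffix estimate
  have hsuf : ρ (f m) (f (k + 1)) ≤ Pre k := by
    rcases eq_or_lt_of_le hmk with hmk' | hmlt
    · -- m = k : single edge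
      subst hmk'
      have hsplit := hsumnn 1 m
      have := hρnn 0
      rw [hPre]
      dsimp only
      linarith
    · -- m < k : use IH on shifted sequence
      have hPm : Pre k / 2 < Pre m := hQmax hmlt
      have hIH := IH (k - m) (by omega) (fun i => f (m + i))
      have hr2 : m + (k - m + 1) = k + 1 := by omega
      have hr4 : m + (k - m) = k := by omega
      rw [hr2, hr4] at hIH
      simp only [Nat.add_zero] at hIH
      have hshift : ∑ i ∈ Finset.Ico 1 (k - m), ρ (f (m + i)) (f (m + (i + 1)))
          = ∑ i ∈ Finset.Ico (m + 1) k, ρ (f i) (f (i + 1)) := by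
        rw [Finset.sum_Ico_eq_sum_range, Finset.sum_Ico_eq_sum_range]
        have he : k - m - 1 = k - (m + 1) := by omega
        rw [he]
        apply Finset.sum_congr rfl
        intro i _
        have e1 : m + (1 + i) = m + 1 + i := by omega
        have e2 : m + (1 + i + 1) = m + 1 + i + 1 := by omega
        rw [e1, e2]
      rw [hshift] at hIH
      -- key identity: Pre m + Suf = Pre k where
      -- Suf = ρ_m + 2 Σ_{Ico (m+1) k} + ρ_k
      have hkey : Pre m + (ρ (f m) (f (m + 1))
          + 2 * ∑ i ∈ Finset.Ico (m + 1) k, ρ (f i) (f (i + 1))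
          + ρ (f k) (f (k + 1))) = Pre k := by
        have hsplit1 : ∑ i ∈ Finset.Ico 1 k, ρ (f i) (f (i + 1))
            = ∑ i ∈ Finset.Ico 1 m, ρ (f i) (f (i + 1))
              + ∑ i ∈ Finset.Ico m k, ρ (f i) (f (i + 1)) :=
          (Finset.sum_Ico_consecutive _ hm1 (le_of_lt hmlt)).symm
        have hsplit2 : ∑ i ∈ Finset.Ico m k, ρ (f i) (f (i + 1))
            = ρ (f m) (f (m + 1))
              + ∑ i ∈ Finset.Ico (m + 1) k, ρ (f i) (f (i + 1)) :=
          Finset.sum_eq_sum_Ico_succ_bot hmlt _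
        rw [hPre]
        dsimp only
        rw [hsplit1, hsplit2]
        ring
      have hSufnn : 0 ≤ ρ (f m) (f (m + 1))
          + 2 * ∑ i ∈ Finset.Ico (m + 1) k, ρ (f i) (f (i + 1))
          + ρ (f k) (f (k + 1)) := by
        have := hsumnn (m + 1) k
        have := hρnn m
        have := hρnn k
        linarith
      have hSufle : ρ (f m) (f (m + 1))
          + 2 * ∑ i ∈ Finset.Ico (m + 1) k, ρ (f i) (f (i + 1))
          + ρ (f k) (f (k + 1)) ≤ Pre k / 2 := by linarith
      have hmul : K * (ρ (f m) (f (m + 1))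
          + 2 * ∑ i ∈ Finset.Ico (m + 1) k, ρ (f i) (f (i + 1))
          + ρ (f k) (f (k + 1))) ≤ 2 * (ρ (f m) (f (m + 1))
          + 2 * ∑ i ∈ Finset.Ico (m + 1) k, ρ (f i) (f (i + 1))
          + ρ (f k) (f (k + 1))) := mul_le_mul_of_nonneg_right hK hSufnn
      linarith
  have hfin : ρ (f 0) (f (k + 1)) ≤ K * Pre k := by
    calc ρ (f 0) (f (k + 1)) ≤ K * max (ρ (f 0) (f m)) (ρ (f m) (f (k + 1))) :=
          htri _ _ _
      _ ≤ K * Pre k := by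
          apply mul_le_mul_of_nonneg_left _ (by linarith)
          exact max_le hpref hsuf
  rw [hPre] at hfin
  exact hfin
end

section
/- Let ρ be a K-quasi-metric on a set Z with K ≤ 2. Then the chain construction d(z,z') = inf over chains z = z_0, …, z_{n+1} = z' of Σ ρ(z_i, z_{i+1}) yields a metric d on Z satisfying (1/(2K))·ρ ≤ d ≤ ρ. -/
/-- The chain construction: `d(z,z')` is the infimum over all finite chains
`z = z_0, …, z_{n+1} = z'` of `Σ_{i=0}^{n} ρ(z_i, z_{i+1})`. -/
noncomputable def chainDist {X : Type*} (ρ : X → X → ℝ) (z z' : X) : ℝ :=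
  sInf {s : ℝ | ∃ (n : ℕ) (f : ℕ → X), f 0 = z ∧ f (n + 1) = z' ∧
    s = ∑ i ∈ Finset.range (n + 1), ρ (f i) (f (i + 1))}

namespace FrinkProof

private lemma sum_shift {F : ℕ → ℝ} (c : ℕ) : ∀ d : ℕ,
    ∑ i ∈ Finset.range (c + d), F i
      = ∑ i ∈ Finset.range c, F i + ∑ i ∈ Finset.range d, F (c + i) := by
  intro d
  induction d with
  | zero => simp
  | succ d ih =>
    rw [show c + (d+1) = (c+d)+1 from rfl, Finset.sum_range_succ, ih,
      Finset.sum_range_succ]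
    ring

private lemma aux {Z : Type*} {K : ℝ} {ρ : Z → Z → ℝ}
    (h : IsQuasiMetric K ρ) (hK1 : 1 ≤ K) (hK : K ≤ 2) :
    ∀ N : ℕ, ∀ f : ℕ → Z, 2 ≤ N →
      ρ (f 0) (f N) ≤ K * (2 * (∑ i ∈ Finset.range N, ρ (f i) (f (i+1)))
        - ρ (f 0) (f 1) - ρ (f (N-1)) (f N)) := by
  intro N
  induction N using Nat.strong_induction_on with
  | _ N IH =>
  intro f hN
  obtain ⟨M, rfl⟩ : ∃ M, N = M + 2 := ⟨N - 2, by omega⟩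
  obtain ⟨hnn, heq, hsym, htri⟩ := h
  classical
  obtain ⟨q, hqdef⟩ : ∃ q : ℕ → ℝ, ∀ i,
      q i = 2 * ∑ j ∈ Finset.range i, ρ (f j) (f (j+1)) + ρ (f i) (f (i+1)) :=
    ⟨_, fun i => rfl⟩
  have ha : ∀ i, 0 ≤ ρ (f i) (f (i+1)) := fun i => hnn _ _
  have hK0 : (0:ℝ) ≤ K := by linarith
  have hgap : ∀ i, q (i+1) - q i = ρ (f i) (f (i+1)) + ρ (f (i+1)) (f (i+1+1)) := by
    intro i
    rw [hqdef, hqdef, Finset.sum_range_succ]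
    ring
  have hmono : Monotone q := by
    apply monotone_nat_of_le_succ
    intro i
    have h1 := ha i
    have h2 := ha (i+1)
    have := hgap i
    linarith
  have hq' : ∀ m, q m = 2 * ∑ i ∈ Finset.range (m+1), ρ (f i) (f (i+1))
      - ρ (f m) (f (m+1)) := by
    intro m
    rw [hqdef, Finset.sum_range_succ]
    ring
  have hq0 : q 0 = ρ (f 0) (f 1) := by rw [hqdef]; simp
  have aEdge : ∀ j, j ≤ M+1 → ρ (f j) (f (j+1)) ≤ q (M+1) - q 0 := by
    intro j hj
    rcases Nat.lt_or_ge j (M+1) with hj' | hj'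
    · have g1 := hgap j
      have m1 : q (j+1) ≤ q (M+1) := hmono (by omega)
      have m2 : q 0 ≤ q j := hmono (Nat.zero_le _)
      have := ha (j+1)
      linarith
    · have hj2 : j = M+1 := by omega
      subst hj2
      have g1 := hgap M
      have m2 : q 0 ≤ q M := hmono (Nat.zero_le _)
      have := ha M
      linarith
  -- rewrite the goal in terms of q
  have hgoal : K * (2 * (∑ i ∈ Finset.range (M+2), ρ (f i) (f (i+1)))
      - ρ (f 0) (f 1) - ρ (f (M+2-1)) (f (M+2))) = K * (q (M+1) - q 0) := by
    have := hq' (M+1)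
    rw [show M+1+1 = M+2 from rfl] at this
    rw [show M+2-1 = M+1 from rfl, this, hq0]
    ring
  rw [hgoal]
  rcases eq_or_lt_of_le (hmono (Nat.zero_le (M+1)) : q 0 ≤ q (M+1)) with hE | hE
  · -- degenerate case: all edges are zero
    have hz : ∀ j, j ≤ M+1 → ρ (f j) (f (j+1)) = 0 := by
      intro j hj
      have h1 := aEdge j hj
      have h2 := ha j
      rw [← hE] at h1
      linarith
    have key : ∀ i, i ≤ M + 2 → f i = f 0 := by
      intro i
      induction i with
      | zero => intro _; rfl
      | succ i ih =>
        intro hi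
        have hx := hz i (by omega)
        have h2 : f i = f (i+1) := (heq _ _).mp hx
        rw [← h2]
        exact ih (by omega)
    rw [key (M+2) le_rfl, (heq _ _).mpr rfl, ← hE]
    simp
  · -- main case
    obtain ⟨t, htdef⟩ : ∃ t : ℝ, t = q 0 + (q (M+1) - q 0)/2 := ⟨_, rfl⟩
    have hex : ∃ i, t < q i := ⟨M+1, by rw [htdef]; linarith⟩
    obtain ⟨p, hpdef⟩ : ∃ p, p = Nat.find hex := ⟨_, rfl⟩
    have hp : t < q p := hpdef ▸ Nat.find_spec hex
    have hmin : ∀ i, i < p → ¬ t < q i := fun i hi => Nat.find_min hex (hpdef ▸ hi)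
    have hp1 : 1 ≤ p := by
      by_contra hc
      have hp0 : p = 0 := by omega
      rw [hp0] at hp
      rw [htdef] at hp
      linarith
    have hpM : p ≤ M+1 := hpdef ▸ Nat.find_min' hex (by rw [htdef]; linarith)
    have hqp1 : q (p-1) ≤ t := not_lt.mp (hmin (p-1) (by omega))
    have hEpos : 0 ≤ q (M+1) - q 0 := by linarith
    have hhalf : ∀ x : ℝ, x ≤ K * ((q (M+1) - q 0)/2) → x ≤ q (M+1) - q 0 := by
      intro x hx
      nlinarith [mul_nonneg (show (0:ℝ) ≤ 2 - K by linarith) hEpos]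
    -- left bound
    have hL : ρ (f 0) (f p) ≤ q (M+1) - q 0 := by
      rcases eq_or_lt_of_le hp1 with hp2 | hp2
      · rw [← hp2]
        exact aEdge 0 (by omega)
      · have hp2' : 2 ≤ p := hp2
        have hps : p - 1 + 1 = p := by omega
        have hIH := IH p (by omega) f hp2'
        have hqq := hq' (p-1)
        rw [hps] at hqq
        have hrw : K * (2 * (∑ i ∈ Finset.range p, ρ (f i) (f (i+1)))
            - ρ (f 0) (f 1) - ρ (f (p-1)) (f p)) = K * (q (p-1) - q 0) := by
          rw [hqq, hq0]; ring
        rw [hrw] at hIH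
        apply hhalf
        calc ρ (f 0) (f p) ≤ K * (q (p-1) - q 0) := hIH
          _ ≤ K * ((q (M+1) - q 0)/2) := by
              apply mul_le_mul_of_nonneg_left _ hK0
              rw [htdef] at hqp1
              linarith
    -- right bound
    have hR : ρ (f p) (f (M+2)) ≤ q (M+1) - q 0 := by
      rcases eq_or_lt_of_le hpM with hpe | hpe
      · rw [hpe]
        exact aEdge (M+1) le_rfl
      · have hNR2 : 2 ≤ M + 2 - p := by omega
        have hpNR : p + (M + 2 - p) = M + 2 := by omega
        have hIH := IH (M + 2 - p) (by omega) (fun i => f (p + i)) hNR2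
        beta_reduce at hIH
        rw [hpNR, show p + (M + 2 - p - 1) = M + 1 by omega] at hIH
        simp only [← Nat.add_assoc, Nat.add_zero] at hIH
        -- now rewrite the sum
        have hsum : ∑ i ∈ Finset.range (M + 2 - p), ρ (f (p + i)) (f (p + i + 1))
            = ∑ i ∈ Finset.range (M+2), ρ (f i) (f (i+1))
              - ∑ i ∈ Finset.range p, ρ (f i) (f (i+1)) := by
          have h2 := sum_shift (F := fun j => ρ (f j) (f (j+1))) p (M + 2 - p)
          rw [hpNR] at h2
          linarith [h2]
        rw [hsum] at hIH
        have hqp : q p = 2 * ∑ i ∈ Finset.range p, ρ (f i) (f (i+1))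
            + ρ (f p) (f (p+1)) := hqdef p
        have hqM : q (M+1) = 2 * ∑ i ∈ Finset.range (M+2), ρ (f i) (f (i+1))
            - ρ (f (M+1)) (f (M+1+1)) := hq' (M+1)
        have hrw : K * (2 * (∑ i ∈ Finset.range (M+2), ρ (f i) (f (i+1))
              - ∑ i ∈ Finset.range p, ρ (f i) (f (i+1)))
            - ρ (f p) (f (p+1)) - ρ (f (M+1)) (f (M+2))) = K * (q (M+1) - q p) := by
          rw [hqM, hqp, show M+1+1 = M+2 from rfl]
          ring
        rw [hrw] at hIH
        apply hhalf
        calc ρ (f p) (f (M+2)) ≤ K * (q (M+1) - q p) := hIH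
          _ ≤ K * ((q (M+1) - q 0)/2) := by
              apply mul_le_mul_of_nonneg_left _ hK0
              rw [htdef] at hp
              linarith
    calc ρ (f 0) (f (M+2)) ≤ K * max (ρ (f 0) (f p)) (ρ (f p) (f (M+2))) :=
          htri _ _ _
      _ ≤ K * (q (M+1) - q 0) := by
          apply mul_le_mul_of_nonneg_left (max_le hL hR) hK0

private lemma chain_bound {Z : Type*} {K : ℝ} {ρ : Z → Z → ℝ}
    (h : IsQuasiMetric K ρ) (hK1 : 1 ≤ K) (hK : K ≤ 2) (n : ℕ) (f : ℕ → Z) :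
    ρ (f 0) (f (n+1)) ≤ 2 * K * ∑ i ∈ Finset.range (n+1), ρ (f i) (f (i+1)) := by
  have hnn := h.1
  have hS : 0 ≤ ∑ i ∈ Finset.range (n+1), ρ (f i) (f (i+1)) :=
    Finset.sum_nonneg fun i _ => hnn _ _
  rcases Nat.eq_zero_or_pos n with hn | hn
  · subst hn
    rw [Finset.sum_range_one]
    nlinarith [hnn (f 0) (f 1)]
  · have h2 : 2 ≤ n + 1 := by omega
    have := aux h hK1 hK (n+1) f h2
    have ha0 := hnn (f 0) (f 1)
    have ha1 := hnn (f (n+1-1)) (f (n+1))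
    have hK0 : (0:ℝ) ≤ K := by linarith
    nlinarith [this]

private lemma mem_set {Z : Type*} (ρ : Z → Z → ℝ) (z z' : Z) :
    ρ z z' ∈ {s : ℝ | ∃ (n : ℕ) (f : ℕ → Z), f 0 = z ∧ f (n + 1) = z' ∧
      s = ∑ i ∈ Finset.range (n + 1), ρ (f i) (f (i + 1))} := by
  refine ⟨0, fun i => Nat.casesOn i z fun _ => z', rfl, rfl, ?_⟩
  rw [Finset.sum_range_one]
  rfl

private lemma lb_set {Z : Type*} {K : ℝ} {ρ : Z → Z → ℝ}
    (h : IsQuasiMetric K ρ) (hK1 : 1 ≤ K) (hK : K ≤ 2) (z z' : Z) :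
    ∀ s ∈ {s : ℝ | ∃ (n : ℕ) (f : ℕ → Z), f 0 = z ∧ f (n + 1) = z' ∧
      s = ∑ i ∈ Finset.range (n + 1), ρ (f i) (f (i + 1))},
      (1 / (2 * K)) * ρ z z' ≤ s := by
  rintro s ⟨n, f, h0, h1, rfl⟩
  have hb := chain_bound h hK1 hK n f
  rw [h0, h1] at hb
  have h2K : (0:ℝ) < 2 * K := by linarith
  rw [div_mul_eq_mul_div, div_le_iff₀ h2K, one_mul]
  linarith

private lemma chainDist_le {Z : Type*} {K : ℝ} {ρ : Z → Z → ℝ}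
    (h : IsQuasiMetric K ρ) (hK1 : 1 ≤ K) (hK : K ≤ 2) (z z' : Z) :
    chainDist ρ z z' ≤ ρ z z' :=
  csInf_le ⟨(1 / (2 * K)) * ρ z z', lb_set h hK1 hK z z'⟩ (mem_set ρ z z')

private lemma chainDist_lb {Z : Type*} {K : ℝ} {ρ : Z → Z → ℝ}
    (h : IsQuasiMetric K ρ) (hK1 : 1 ≤ K) (hK : K ≤ 2) (z z' : Z) :
    (1 / (2 * K)) * ρ z z' ≤ chainDist ρ z z' :=
  le_csInf ⟨_, mem_set ρ z z'⟩ (lb_set h hK1 hK z z')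

private lemma set_symm {Z : Type*} {K : ℝ} {ρ : Z → Z → ℝ}
    (h : IsQuasiMetric K ρ) (z z' : Z) :
    {s : ℝ | ∃ (n : ℕ) (f : ℕ → Z), f 0 = z ∧ f (n + 1) = z' ∧
      s = ∑ i ∈ Finset.range (n + 1), ρ (f i) (f (i + 1))} ⊆
    {s : ℝ | ∃ (n : ℕ) (f : ℕ → Z), f 0 = z' ∧ f (n + 1) = z ∧
      s = ∑ i ∈ Finset.range (n + 1), ρ (f i) (f (i + 1))} := by
  rintro s ⟨n, f, h0, h1, rfl⟩
  refine ⟨n, fun i => f (n + 1 - i), by simpa using h1, by simpa using h0, ?_⟩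
  have key : ∀ i ∈ Finset.range (n+1),
      ρ (f (n + 1 - i)) (f (n + 1 - (i + 1)))
        = (fun j => ρ (f j) (f (j+1))) (n - i) := by
    intro i hi
    simp only [Finset.mem_range] at hi
    have e1 : n + 1 - i = (n - i) + 1 := by omega
    have e2 : n + 1 - (i + 1) = n - i := by omega
    rw [e1, e2]
    exact h.2.2.1 _ _
  rw [Finset.sum_congr rfl key]
  have := (Finset.sum_range_reflect (fun j => ρ (f j) (f (j+1))) (n+1)).symm
  simpa using this

private lemma chainDist_symm {Z : Type*} {K : ℝ} {ρ : Z → Z → ℝ}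
    (h : IsQuasiMetric K ρ) (z z' : Z) :
    chainDist ρ z z' = chainDist ρ z' z := by
  unfold chainDist
  congr 1
  exact Set.Subset.antisymm (set_symm h z z') (set_symm h z' z)

private lemma chainDist_triangle {Z : Type*} {K : ℝ} {ρ : Z → Z → ℝ}
    (h : IsQuasiMetric K ρ) (hK1 : 1 ≤ K) (hK : K ≤ 2) (z z' z'' : Z) :
    chainDist ρ z z'' ≤ chainDist ρ z z' + chainDist ρ z' z'' := by
  apply le_of_forall_pos_le_add
  intro ε hε
  obtain ⟨s1, hs1m, hs1⟩ := Real.lt_sInf_add_pos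
    (⟨_, mem_set ρ z z'⟩ : Set.Nonempty _) (half_pos hε)
  obtain ⟨s2, hs2m, hs2⟩ := Real.lt_sInf_add_pos
    (⟨_, mem_set ρ z' z''⟩ : Set.Nonempty _) (half_pos hε)
  obtain ⟨n, F, hF0, hF1, rfl⟩ := hs1m
  obtain ⟨m, G, hG0, hG1, rfl⟩ := hs2m
  have key : chainDist ρ z z'' ≤
      (∑ i ∈ Finset.range (n + 1), ρ (F i) (F (i + 1)))
      + ∑ i ∈ Finset.range (m + 1), ρ (G i) (G (i + 1)) := by
    apply csInf_le ⟨(1 / (2 * K)) * ρ z z'', lb_set h hK1 hK z z''⟩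
    refine ⟨n + m + 1, fun i => if i ≤ n + 1 then F i else G (i - (n+1)),
      by simp [hF0], ?_, ?_⟩
    · have : ¬ (n + m + 1 + 1 ≤ n + 1) := by omega
      simp only [this, if_false]
      rw [show n + m + 1 + 1 - (n+1) = m + 1 by omega, hG1]
    · rw [show n + m + 1 + 1 = (n+1) + (m+1) from by omega]
      conv_rhs => rw [sum_shift (n+1) (m+1)]
      congr 1
      · refine (Finset.sum_congr rfl ?_).symm
        intro i hi
        simp only [Finset.mem_range] at hi
        beta_reduce
        rw [if_pos (by omega : i ≤ n + 1), if_pos (by omega : i + 1 ≤ n + 1)]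
      · refine (Finset.sum_congr rfl ?_).symm
        intro j hj
        simp only [Finset.mem_range] at hj
        beta_reduce
        have e2 : ¬ (n + 1 + j + 1 ≤ n + 1) := by omega
        rw [if_neg e2, show n + 1 + j + 1 - (n + 1) = j + 1 by omega]
        rcases Nat.eq_zero_or_pos j with hj0 | hj0
        · subst hj0
          rw [if_pos (by omega : n + 1 + 0 ≤ n + 1),
            show n + 1 + 0 = n + 1 from rfl, hF1, ← hG0]
        · rw [if_neg (by omega : ¬ (n + 1 + j ≤ n + 1)),
            show n + 1 + j - (n + 1) = j by omega]
  calc chainDist ρ z z'' ≤ _ := key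
    _ ≤ (chainDist ρ z z' + ε/2) + (chainDist ρ z' z'' + ε/2) :=
        add_le_add hs1.le hs2.le
    _ = chainDist ρ z z' + chainDist ρ z' z'' + ε := by ring

end FrinkProof

/-- Frink's theorem: for a `K`-quasi-metric with `K ≤ 2` the chain construction
yields a metric `d` with `(1/(2K))·ρ ≤ d ≤ ρ`. -/
theorem chainDist_is_metric {Z : Type*} (K : ℝ) (ρ : Z → Z → ℝ)
    (h : IsQuasiMetric K ρ) (hK1 : 1 ≤ K) (hK : K ≤ 2) :
    (∀ z z', chainDist ρ z z' = 0 ↔ z = z') ∧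
    (∀ z z', chainDist ρ z z' = chainDist ρ z' z) ∧
    (∀ z z' z'', chainDist ρ z z'' ≤ chainDist ρ z z' + chainDist ρ z' z'') ∧
    (∀ z z', (1 / (2 * K)) * ρ z z' ≤ chainDist ρ z z' ∧
      chainDist ρ z z' ≤ ρ z z') := by
  have h2K : (0:ℝ) < 1 / (2 * K) := by positivity
  refine ⟨?_, fun z z' => FrinkProof.chainDist_symm h z z',
    fun z z' z'' => FrinkProof.chainDist_triangle h hK1 hK z z' z'',
    fun z z' => ⟨FrinkProof.chainDist_lb h hK1 hK z z',
      FrinkProof.chainDist_le h hK1 hK z z'⟩⟩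
  intro z z'
  constructor
  · intro h0
    have hlb := FrinkProof.chainDist_lb h hK1 hK z z'
    rw [h0] at hlb
    have hρ : ρ z z' = 0 := by
      have := h.1 z z'
      nlinarith
    exact (h.2.1 z z').mp hρ
  · rintro rfl
    have hub := FrinkProof.chainDist_le h hK1 hK z z
    have hρ : ρ z z = 0 := (h.2.1 z z).mpr rfl
    rw [hρ] at hub
    have hlb := FrinkProof.chainDist_lb h hK1 hK z z
    rw [hρ] at hlb
    simp at hlb
    linarith
end

section
/- Let ρ be a 2-quasi-metric on Z and d the chain-construction pseudometric. Then d(z,z') = 0 implies z = z'; in particular the chain construction yields a genuine metric. -/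
lemma chain_bound_aux {Z : Type*} {ρ : Z → Z → ℝ}
    (hnn : ∀ z z', 0 ≤ ρ z z')
    (htri : ∀ z z' z'', ρ z z'' ≤ 2 * max (ρ z z') (ρ z' z'')) :
    ∀ n : ℕ, ∀ f : ℕ → Z, 1 ≤ n →
      ρ (f 0) (f (n + 1)) ≤ 2 * ρ (f 0) (f 1) + 2 * ρ (f n) (f (n + 1))
        + 4 * ∑ i ∈ Finset.Ico 1 n, ρ (f i) (f (i + 1)) := by
  intro n
  induction n using Nat.strong_induction_on with
  | _ n IH =>
  intro f hn
  classical
  have hsum_nonneg : ∀ (u v : ℕ), 0 ≤ ∑ i ∈ Finset.Ico u v, ρ (f i) (f (i + 1)) :=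
    fun u v => Finset.sum_nonneg fun i _ => hnn _ _
  rcases eq_or_lt_of_le hn with h1 | h2
  · -- base case n = 1
    subst h1
    have := htri (f 0) (f 1) (f 2)
    have h0 : 0 ≤ ρ (f 0) (f 1) := hnn _ _
    have h1 : 0 ≤ ρ (f 1) (f 2) := hnn _ _
    rcases le_total (ρ (f 0) (f 1)) (ρ (f 1) (f 2)) with hc | hc
    · rw [max_eq_right hc] at this
      simp only [Finset.Ico_self, Finset.sum_empty]
      linarith
    · rw [max_eq_left hc] at this
      simp only [Finset.Ico_self, Finset.sum_empty]
      linarith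
  · -- n ≥ 2
    set W : ℝ := 2 * ρ (f 0) (f 1) + 2 * ρ (f n) (f (n + 1))
        + 4 * ∑ i ∈ Finset.Ico 1 n, ρ (f i) (f (i + 1)) with hW
    set P : ℕ → ℝ := fun m =>
      if m = 1 then ρ (f 0) (f 1)
      else 2 * ρ (f 0) (f 1) + 2 * ρ (f (m - 1)) (f m)
        + 4 * ∑ i ∈ Finset.Ico 1 (m - 1), ρ (f i) (f (i + 1)) with hP
    have hPbound : ∀ m, 1 ≤ m → m ≤ n → ρ (f 0) (f m) ≤ P m := by
      intro m hm1 hmn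
      rcases eq_or_lt_of_le hm1 with he | hm2
      · rw [← he]
        simp [hP]
      · have hlt : m - 1 < n := by omega
        have h1m : 1 ≤ m - 1 := by omega
        have := IH (m - 1) hlt f h1m
        rw [show m - 1 + 1 = m by omega] at this
        have hne1 : m ≠ 1 := by omega
        simp only [hP, if_neg hne1]
        exact this
    have hQbound : ∀ m, 1 ≤ m → m + 1 ≤ n → ρ (f m) (f (n + 1)) ≤
        2 * ρ (f m) (f (m + 1)) + 2 * ρ (f n) (f (n + 1))
          + 4 * ∑ i ∈ Finset.Ico (m + 1) n, ρ (f i) (f (i + 1)) := by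
      intro m hm1 hmn
      have h := IH (n - m) (by omega) (fun i => f (m + i)) (by omega)
      rw [show m + 0 = m from rfl, show m + (n - m + 1) = n + 1 by omega,
        show m + (n - m) = n by omega] at h
      have hre : ∑ i ∈ Finset.Ico 1 (n - m), ρ (f (m + i)) (f (m + (i + 1)))
          = ∑ i ∈ Finset.Ico (m + 1) n, ρ (f i) (f (i + 1)) := by
        rw [Finset.sum_Ico_eq_sum_range, Finset.sum_Ico_eq_sum_range]
        rw [show n - m - 1 = n - (m + 1) by omega]
        apply Finset.sum_congr rfl
        intro i _
        rw [show m + (1 + i) = m + 1 + i by omega,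
          show m + (1 + i + 1) = m + 1 + i + 1 by omega]
      rw [hre] at h
      exact h
    -- choose the maximal split index
    have hQne : ((Finset.Icc 1 n).filter fun m => 2 * P m ≤ W).Nonempty := by
      refine ⟨1, Finset.mem_filter.mpr ⟨Finset.mem_Icc.mpr ⟨le_refl 1, hn⟩, ?_⟩⟩
      have : P 1 = ρ (f 0) (f 1) := by simp [hP]
      rw [this, hW]
      have := hsum_nonneg 1 n
      have := hnn (f n) (f (n + 1))
      linarith
    set m := ((Finset.Icc 1 n).filter fun m => 2 * P m ≤ W).max' hQne with hmdef
    have hmmem := ((Finset.Icc 1 n).filter fun m => 2 * P m ≤ W).max'_mem hQne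
    rw [← hmdef] at hmmem
    obtain ⟨hmIcc, hPm⟩ := Finset.mem_filter.mp hmmem
    obtain ⟨hm1, hmn⟩ := Finset.mem_Icc.mp hmIcc
    rcases eq_or_lt_of_le hmn with hcase | hcase
    · -- m = n : split at f n
      have hx : ρ (f 0) (f n) ≤ P n := hPbound n (by omega) (le_refl n)
      rw [hcase] at hPm
      have htr := htri (f 0) (f n) (f (n + 1))
      have h2y : 2 * ρ (f n) (f (n + 1)) ≤ W := by
        rw [hW]
        have := hnn (f 0) (f 1)
        have := hsum_nonneg 1 n
        linarith
      rcases le_total (ρ (f 0) (f n)) (ρ (f n) (f (n + 1))) with hc | hc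
      · rw [max_eq_right hc] at htr; linarith
      · rw [max_eq_left hc] at htr; linarith
    · -- m < n
      have hnotin : ¬ (2 * P (m + 1) ≤ W) := by
        intro hcon
        have hmem' : (m + 1) ∈ (Finset.Icc 1 n).filter fun m => 2 * P m ≤ W :=
          Finset.mem_filter.mpr ⟨Finset.mem_Icc.mpr ⟨by omega, by omega⟩, hcon⟩
        have := Finset.le_max' _ _ hmem'
        rw [← hmdef] at this
        omega
      push_neg at hnotin
      have hPm1 : P (m + 1) = 2 * ρ (f 0) (f 1) + 2 * ρ (f m) (f (m + 1))
          + 4 * ∑ i ∈ Finset.Ico 1 m, ρ (f i) (f (i + 1)) := by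
        have hne1 : m + 1 ≠ 1 := by omega
        simp only [hP, if_neg hne1, Nat.add_sub_cancel]
      -- sum splitting identity
      have hsplit : ∑ i ∈ Finset.Ico 1 n, ρ (f i) (f (i + 1))
          = ∑ i ∈ Finset.Ico 1 m, ρ (f i) (f (i + 1)) + ρ (f m) (f (m + 1))
            + ∑ i ∈ Finset.Ico (m + 1) n, ρ (f i) (f (i + 1)) := by
        rw [← Finset.sum_Ico_consecutive _ hm1 (le_of_lt hcase)]
        rw [Finset.sum_eq_sum_Ico_succ_bot hcase]
        ring
      have hx : ρ (f 0) (f m) ≤ P m := hPbound m hm1 hmn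
      have hy := hQbound m hm1 (by omega)
      have htr := htri (f 0) (f m) (f (n + 1))
      -- key: Q = W - P (m+1) < W / 2
      have hQlt : 2 * (2 * ρ (f m) (f (m + 1)) + 2 * ρ (f n) (f (n + 1))
          + 4 * ∑ i ∈ Finset.Ico (m + 1) n, ρ (f i) (f (i + 1))) ≤ W := by
        linarith [hW, hsplit, hPm1, hnotin]
      rcases le_total (ρ (f 0) (f m)) (ρ (f m) (f (n + 1))) with hc | hc
      · rw [max_eq_right hc] at htr; linarith
      · rw [max_eq_left hc] at htr; linarith

lemma chain_bound {Z : Type*} {ρ : Z → Z → ℝ}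
    (hnn : ∀ z z', 0 ≤ ρ z z')
    (htri : ∀ z z' z'', ρ z z'' ≤ 2 * max (ρ z z') (ρ z' z'')) :
    ∀ n : ℕ, ∀ f : ℕ → Z,
      ρ (f 0) (f (n + 1)) ≤ 4 * ∑ i ∈ Finset.range (n + 1), ρ (f i) (f (i + 1)) := by
  intro n f
  rcases Nat.eq_zero_or_pos n with h0 | h1
  · subst h0
    rw [Finset.sum_range_one]
    have := hnn (f 0) (f 1)
    linarith
  · have h := chain_bound_aux hnn htri n f h1
    have hsum : ∑ i ∈ Finset.range (n + 1), ρ (f i) (f (i + 1))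
        = ρ (f 0) (f 1) + ∑ i ∈ Finset.Ico 1 n, ρ (f i) (f (i + 1))
          + ρ (f n) (f (n + 1)) := by
      rw [Finset.range_eq_Ico, Finset.sum_eq_sum_Ico_succ_bot (by omega : 0 < n + 1)]
      rw [Finset.sum_Ico_succ_top h1]
      ring
    have hs := Finset.sum_nonneg (fun i (_ : i ∈ Finset.Ico 1 n) => hnn (f i) (f (i + 1)))
    have := hnn (f 0) (f 1)
    have := hnn (f n) (f (n + 1))
    rw [hsum]
    linarith

/-- For a `2`-quasi-metric, the chain-construction pseudometric vanishes only
on the diagonal; in particular the chain construction yields a genuine metric. -/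
theorem chainDist_eq_zero_imp_eq {Z : Type*} (ρ : Z → Z → ℝ)
    (h : IsQuasiMetric 2 ρ) :
    ∀ z z' : Z, chainDist ρ z z' = 0 → z = z' := by
  obtain ⟨hnn, heq, hsym, htri⟩ := h
  intro z z' h0
  have htri' : ∀ x y w : Z, ρ x w ≤ 2 * max (ρ x y) (ρ y w) := htri
  set S : Set ℝ := {s : ℝ | ∃ (n : ℕ) (f : ℕ → Z), f 0 = z ∧ f (n + 1) = z' ∧
    s = ∑ i ∈ Finset.range (n + 1), ρ (f i) (f (i + 1))} with hS
  have hSne : S.Nonempty := by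
    refine ⟨ρ z z', 0, fun i => if i = 0 then z else z', by simp, by simp, ?_⟩
    simp [Finset.sum_range_one]
  have hlb : ∀ s ∈ S, ρ z z' / 4 ≤ s := by
    rintro s ⟨n, f, hf0, hfn, rfl⟩
    have := chain_bound hnn htri' n f
    rw [hf0, hfn] at this
    linarith
  have hle : ρ z z' / 4 ≤ chainDist ρ z z' := le_csInf hSne hlb
  rw [h0] at hle
  have h1 : ρ z z' = 0 := le_antisymm (by linarith) (hnn z z')
  exact (heq z z').mp h1
end

section
/- Let z be a dyadic rational in (0,1) of level N ≥ 1. Consider the multiset of levels of all points on the left path z, l(z), …, 0 and the right path z, r(z), …, 1, excluding z itself and the endpoints 0 and 1. Then every integer n with 0 < n < N occurs exactly once among these levels. -/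
/-- A rational is dyadic if it can be written as `k / 2^n`. -/
def IsDyadic (q : ℚ) : Prop := ∃ (k : ℤ) (n : ℕ), q = (k : ℚ) / 2 ^ n

/-- Membership in `Z`, the set of dyadic rationals of `[0,1]`. -/
def InZ (q : ℚ) : Prop := 0 ≤ q ∧ q ≤ 1 ∧ IsDyadic q

/-- The level of a dyadic rational: the least `n` with `q = k / 2^n` for some
integer `k`.  The endpoints `0` and `1` have level `0`. -/
noncomputable def level (q : ℚ) : ℕ := sInf {n : ℕ | ∃ k : ℤ, q = (k : ℚ) / 2 ^ n}

/-- The left neighbor `l(z) = (k-1)/2^n` of `z = k/2^n` (in lowest terms,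
`k` odd, `n ≥ 1`); points of level `0` are fixed. -/
noncomputable def lnb (q : ℚ) : ℚ :=
  if level q = 0 then q else q - (1 / 2 : ℚ) ^ level q

/-- The right neighbor `r(z) = (k+1)/2^n` of `z = k/2^n` (in lowest terms,
`k` odd, `n ≥ 1`); points of level `0` are fixed. -/
noncomputable def rnb (q : ℚ) : ℚ :=
  if level q = 0 then q else q + (1 / 2 : ℚ) ^ level q

/-!
Write `z = k / 2^N` with `k = 2m + 1` odd and `N ≥ 2`. Its neighbours are `m / 2^(N-1)` and
`(m + 1) / 2^(N-1)`; exactly one of them, `w`, has odd numerator and hence level `N - 1`, and the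
other neighbour of `z` is the neighbour of `w` on the same side. So the paths from `z` consist of
`w` followed by the paths from `w`, along which levels strictly decrease. Induction on `N`.
-/

open Set

section Iterate

variable {α : Type*} {f : α → α}

lemma mem_range_iterate_succ_iff {x y : α} :
    y ∈ range (fun i : ℕ => f^[i + 1] x) ↔ ∃ i, 1 ≤ i ∧ y = f^[i] x :=
  ⟨fun ⟨i, h⟩ => ⟨i + 1, by omega, h.symm⟩,
    fun ⟨i, hi, h⟩ => ⟨i - 1, by simp only [Nat.sub_add_cancel hi, h]⟩⟩

lemma range_iterate_succ_eq_insert (f : α → α) (x : α) :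
    range (fun i : ℕ => f^[i + 1] x) = insert (f x) (range fun i : ℕ => f^[i + 1] (f x)) := by
  simp only [Function.iterate_succ_apply, insert_eq]
  exact (Nat.range_of_succ fun i => f^[i] (f x)).symm

lemma range_iterate_succ_congr {x y : α} (h : f x = f y) :
    range (fun i : ℕ => f^[i + 1] x) = range fun i : ℕ => f^[i + 1] y := by
  simp only [Function.iterate_succ_apply, h]

lemma iterate_succ_lt {μ : α → ℕ} (hle : ∀ x, μ (f x) ≤ μ x)
    (hlt : ∀ x, μ x ≠ 0 → μ (f x) < μ x) {x : α} (hx : μ x ≠ 0) (i : ℕ) :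
    μ (f^[i + 1] x) < μ x := by
  have iterate_le : ∀ (i : ℕ) (y : α), μ (f^[i] y) ≤ μ y := by
    intro i
    induction i with
    | zero => exact fun _ => le_rfl
    | succ i ih =>
      intro y
      rw [Function.iterate_succ_apply']
      exact (hle _).trans (ih y)
  rw [Function.iterate_succ_apply]
  exact (iterate_le i (f x)).trans_lt (hlt x hx)

lemma existsUnique_mem_insert {μ : α → ℕ} {w : α} {T : Set α} {n : ℕ}
    (hT : ∀ u ∈ T, μ u < μ w) (hn : n ≤ μ w) (hT_unique : n < μ w → ∃! u, u ∈ T ∧ μ u = n) :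
    ∃! u, u ∈ insert w T ∧ μ u = n := by
  rcases hn.eq_or_lt with rfl | hlt
  · refine ⟨w, ⟨mem_insert w T, rfl⟩, ?_⟩
    rintro u ⟨rfl | hu, hμ⟩
    · rfl
    · exact absurd hμ (hT u hu).ne
  · obtain ⟨u, ⟨hu, hμ⟩, huniq⟩ := hT_unique hlt
    refine ⟨u, ⟨mem_insert_of_mem w hu, hμ⟩, ?_⟩
    rintro v ⟨rfl | hv, hμv⟩
    · exact absurd hμv hlt.ne'
    · exact huniq v ⟨hv, hμv⟩

end Iterate

lemma level_le {q : ℚ} {k : ℤ} {n : ℕ} (h : q = k / 2 ^ n) : level q ≤ n :=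
  Nat.sInf_le ⟨k, h⟩

lemma level_div_two_pow_of_odd {k : ℤ} (hk : Odd k) (n : ℕ) : level (k / 2 ^ n) = n := by
  refine le_antisymm (level_le rfl) (le_csInf ⟨n, k, rfl⟩ ?_)
  rintro m ⟨j, hj⟩
  by_contra! hmn
  have hcross : k * 2 ^ m = j * 2 ^ (n - m) * 2 ^ m := by
    rw [mul_assoc, ← pow_add, Nat.sub_add_cancel hmn.le]
    field_simp at hj
    rw [mul_comm j]
    exact_mod_cast hj
  have hk_eq : k = j * 2 ^ (n - m) := mul_right_cancel₀ (by positivity) hcross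
  have hk_even : Even k := by
    rw [hk_eq]
    exact (Int.even_pow.mpr ⟨even_two, by omega⟩).mul_left j
  exact Int.not_even_iff_odd.mpr hk hk_even

lemma exists_odd_of_level_ne_zero {q : ℚ} (h : level q ≠ 0) :
    ∃ k : ℤ, Odd k ∧ q = k / 2 ^ level q := by
  have hne : {n : ℕ | ∃ k : ℤ, q = k / 2 ^ n}.Nonempty := by
    by_contra hempty
    rw [not_nonempty_iff_eq_empty] at hempty
    exact h (by rw [level, hempty, Nat.sInf_empty])
  obtain ⟨k, hk⟩ : ∃ k : ℤ, q = k / 2 ^ level q := Nat.sInf_mem hne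
  refine ⟨k, Int.not_even_iff_odd.mp fun ⟨j, hj⟩ => ?_, hk⟩
  obtain ⟨M, hM⟩ : ∃ M, level q = M + 1 := ⟨level q - 1, by omega⟩
  have : level q ≤ M := level_le (k := j) (by rw [hk, hM, hj]; push_cast; ring)
  omega

lemma lnb_div_two_pow {k : ℤ} (hk : Odd k) {n : ℕ} (hn : n ≠ 0) :
    lnb (k / 2 ^ n) = (k - 1 : ℤ) / 2 ^ n := by
  rw [lnb, level_div_two_pow_of_odd hk, if_neg hn]
  push_cast
  rw [one_div_pow]
  ring

lemma rnb_div_two_pow {k : ℤ} (hk : Odd k) {n : ℕ} (hn : n ≠ 0) :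
    rnb (k / 2 ^ n) = (k + 1 : ℤ) / 2 ^ n := by
  rw [rnb, level_div_two_pow_of_odd hk, if_neg hn]
  push_cast
  rw [one_div_pow]
  ring

lemma level_lnb_lt {q : ℚ} (h : level q ≠ 0) : level (lnb q) < level q := by
  obtain ⟨k, hk, hq⟩ := exists_odd_of_level_ne_zero h
  obtain ⟨M, hM⟩ : ∃ M, level q = M + 1 := ⟨level q - 1, by omega⟩
  rw [hM] at hq ⊢
  rw [hq, lnb_div_two_pow hk M.add_one_ne_zero]
  obtain ⟨m, rfl⟩ := hk
  exact Nat.lt_succ_of_le (level_le (k := m) (by push_cast; ring))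

lemma level_rnb_lt {q : ℚ} (h : level q ≠ 0) : level (rnb q) < level q := by
  obtain ⟨k, hk, hq⟩ := exists_odd_of_level_ne_zero h
  obtain ⟨M, hM⟩ : ∃ M, level q = M + 1 := ⟨level q - 1, by omega⟩
  rw [hM] at hq ⊢
  rw [hq, rnb_div_two_pow hk M.add_one_ne_zero]
  obtain ⟨m, rfl⟩ := hk
  exact Nat.lt_succ_of_le (level_le (k := m + 1) (by push_cast; ring))

lemma level_lnb_le (q : ℚ) : level (lnb q) ≤ level q := by
  by_cases h : level q = 0
  · rw [lnb, if_pos h]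
  · exact (level_lnb_lt h).le

lemma level_rnb_le (q : ℚ) : level (rnb q) ≤ level q := by
  by_cases h : level q = 0
  · rw [rnb, if_pos h]
  · exact (level_rnb_lt h).le

def neighborPaths (z : ℚ) : Set ℚ :=
  (range fun i : ℕ => lnb^[i + 1] z) ∪ range fun j : ℕ => rnb^[j + 1] z

lemma level_lt_of_mem_neighborPaths {z w : ℚ} (hz : level z ≠ 0) (hw : w ∈ neighborPaths z) :
    level w < level z := by
  rcases hw with ⟨i, rfl⟩ | ⟨j, rfl⟩
  · exact iterate_succ_lt level_lnb_le (fun _ => level_lnb_lt) hz i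
  · exact iterate_succ_lt level_rnb_le (fun _ => level_rnb_lt) hz j

lemma neighborPaths_eq_insert_lnb {z : ℚ} (h : rnb (lnb z) = rnb z) :
    neighborPaths z = insert (lnb z) (neighborPaths (lnb z)) := by
  rw [neighborPaths, neighborPaths, range_iterate_succ_eq_insert lnb z,
    range_iterate_succ_congr h.symm, insert_union]

lemma neighborPaths_eq_insert_rnb {z : ℚ} (h : lnb (rnb z) = lnb z) :
    neighborPaths z = insert (rnb z) (neighborPaths (rnb z)) := by
  rw [neighborPaths, neighborPaths, range_iterate_succ_eq_insert rnb z,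
    range_iterate_succ_congr h.symm, union_insert]

lemma exists_neighborPaths_eq_insert {z : ℚ} (hz : 2 ≤ level z) :
    ∃ w, level w + 1 = level z ∧ neighborPaths z = insert w (neighborPaths w) := by
  obtain ⟨k, hk, hz_eq⟩ := exists_odd_of_level_ne_zero (by omega : level z ≠ 0)
  obtain ⟨n, hn⟩ : ∃ n, level z = n + 2 := ⟨level z - 2, by omega⟩
  rw [hn] at hz_eq ⊢
  have hlnb : lnb z = (k - 1 : ℤ) / 2 ^ (n + 2) := by
    rw [hz_eq, lnb_div_two_pow hk (by omega)]
  have hrnb : rnb z = (k + 1 : ℤ) / 2 ^ (n + 2) := by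
    rw [hz_eq, rnb_div_two_pow hk (by omega)]
  obtain ⟨m, rfl⟩ := hk
  rcases Int.even_or_odd m with hm | hm
  · have hw : rnb z = (m + 1 : ℤ) / 2 ^ (n + 1) := by
      rw [hrnb]; push_cast; field_simp; ring
    have hm1 : Odd (m + 1) := hm.add_one
    refine ⟨rnb z, by rw [hw, level_div_two_pow_of_odd hm1], neighborPaths_eq_insert_rnb ?_⟩
    rw [hw, lnb_div_two_pow hm1 (by omega), hlnb]
    push_cast; field_simp; ring
  · have hw : lnb z = (m : ℤ) / 2 ^ (n + 1) := by
      rw [hlnb]; push_cast; field_simp; ring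
    refine ⟨lnb z, by rw [hw, level_div_two_pow_of_odd hm], neighborPaths_eq_insert_lnb ?_⟩
    rw [hw, rnb_div_two_pow hm (by omega), hrnb]
    push_cast; field_simp; ring

lemma existsUnique_mem_neighborPaths_level (z : ℚ) {n : ℕ} (hn : 0 < n) (hz : n < level z) :
    ∃! w, w ∈ neighborPaths z ∧ level w = n := by
  obtain ⟨N, hN⟩ : ∃ N, level z = N := ⟨_, rfl⟩
  induction N generalizing z with
  | zero => omega
  | succ N ih =>
    obtain ⟨w, hw, hpaths⟩ := exists_neighborPaths_eq_insert (by omega : 2 ≤ level z)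
    rw [hpaths]
    exact existsUnique_mem_insert (fun u hu => level_lt_of_mem_neighborPaths (by omega) hu)
      (by omega) fun hnw => ih w hnw (by omega)

theorem intermediate_levels_occur_once_general (z : ℚ) :
    ∀ n : ℕ, 0 < n → n < level z →
      ∃! w : ℚ,
        ((∃ i : ℕ, 1 ≤ i ∧ w = lnb^[i] z) ∨ (∃ j : ℕ, 1 ≤ j ∧ w = rnb^[j] z)) ∧
        level w = n := by
  intro n hn hnz
  simpa only [neighborPaths, mem_union, mem_range_iterate_succ_iff] using
    existsUnique_mem_neighborPaths_level z hn hnz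

/-- Fact 1: for `z` of level `N ≥ 1`, every intermediate level `0 < n < N`
occurs exactly once among the points of the left path and the right path from
`z` (excluding `z` itself and the endpoints `0`, `1`, which have level `0`). -/
theorem intermediate_levels_occur_once (z : ℚ) (hz : InZ z) (hN : 1 ≤ level z) :
    ∀ n : ℕ, 0 < n → n < level z →
      ∃! w : ℚ,
        ((∃ i : ℕ, 1 ≤ i ∧ w = lnb^[i] z) ∨ (∃ j : ℕ, 1 ≤ j ∧ w = rnb^[j] z)) ∧
        level w = n :=
  intermediate_levels_occur_once_general z
end

section
/- For any two dyadic rationals z < z' in [0,1] with {z,z'} ≠ {0,1}, the right path z, r(z), r²(z), …, 1 and the left path z', l(z'), l²(z'), …, 0 intersect in a unique point. -/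
/-!
Write `ε w = 2^{-level w}`. The right path from `z` consists exactly of the dyadics `w` with
`z ∈ (w - ε w, w]`, and (mirroring under `q ↦ -q`) the left path from `z'` of the dyadics `w`
with `z' ∈ [w, w + ε w)`: a step `r` from `z` lands on `z + ε z`, which is the first dyadic of
level below `level z` to the right of `z`. Two dyadics `u < v` are at least
`2^{-max (level u) (level v)}` apart, so at most one `w` lies on both paths; the dyadic of least
level in `[z, z']` does.
-/

section Level

variable {q u v : ℚ} {k : ℤ} {m n : ℕ}

lemma level_le_of_eq_div (h : q = k / 2 ^ n) : level q ≤ n :=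
  Nat.sInf_le ⟨k, h⟩

lemma IsDyadic.exists_eq_div_two_pow_level (hq : IsDyadic q) :
    ∃ k : ℤ, q = k / 2 ^ level q := by
  obtain ⟨k, n, h⟩ := hq
  exact Nat.sInf_mem (⟨n, k, h⟩ : {n : ℕ | ∃ k : ℤ, q = k / 2 ^ n}.Nonempty)

lemma IsDyadic.exists_eq_div_two_pow_of_level_le (hq : IsDyadic q) (h : level q ≤ m) :
    ∃ k : ℤ, q = k / 2 ^ m := by
  obtain ⟨k, hk⟩ := hq.exists_eq_div_two_pow_level
  obtain ⟨d, rfl⟩ := Nat.exists_eq_add_of_le h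
  refine ⟨k * 2 ^ d, ?_⟩
  conv_lhs => rw [hk]
  push_cast
  rw [pow_add]
  field_simp

lemma IsDyadic.add_half_pow_le (hu : IsDyadic u) (hv : IsDyadic v) (huv : u < v)
    (hum : level u ≤ m) (hvm : level v ≤ m) : u + (1 / 2) ^ m ≤ v := by
  obtain ⟨a, rfl⟩ := hu.exists_eq_div_two_pow_of_level_le hum
  obtain ⟨b, rfl⟩ := hv.exists_eq_div_two_pow_of_level_le hvm
  have hab : a + 1 ≤ b := by
    rw [div_lt_div_iff_of_pos_right (by positivity)] at huv
    exact_mod_cast huv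
  rw [one_div_pow, ← add_div, div_le_div_iff_of_pos_right (by positivity)]
  exact_mod_cast hab

lemma IsDyadic.exists_add_half_pow_eq (hq : IsDyadic q) (h : level q = n + 1) :
    ∃ k : ℤ, q + (1 / 2) ^ (n + 1) = k / 2 ^ n := by
  obtain ⟨k, hk⟩ := hq.exists_eq_div_two_pow_level
  rw [h] at hk
  obtain ⟨j, rfl⟩ : Odd k := by
    refine Int.not_even_iff_odd.mp fun ⟨j, hj⟩ => ?_
    have : q = j / 2 ^ n := by rw [hk, hj, pow_succ]; push_cast; field_simp; ring
    have := level_le_of_eq_div this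
    omega
  exact ⟨j + 1, by rw [hk, one_div_pow, pow_succ]; push_cast; field_simp; ring⟩

lemma isDyadic_neg : IsDyadic (-q) ↔ IsDyadic q := by
  constructor <;> rintro ⟨k, n, h⟩ <;> exact ⟨-k, n, by simp [neg_div, ← h]⟩

lemma level_neg : level (-q) = level q := by
  unfold level
  congr 1
  ext n
  constructor <;> rintro ⟨k, h⟩ <;> exact ⟨-k, by simp [neg_div, ← h]⟩

lemma IsDyadic.level_add_half_pow_le (hq : IsDyadic q) (h : level q = n + 1) :
    IsDyadic (q + (1 / 2) ^ (n + 1)) ∧ level (q + (1 / 2) ^ (n + 1)) ≤ n := by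
  obtain ⟨k, hk⟩ := hq.exists_add_half_pow_eq h
  exact ⟨⟨k, n, hk⟩, level_le_of_eq_div hk⟩

lemma IsDyadic.level_sub_half_pow_le (hq : IsDyadic q) (h : level q = n + 1) :
    IsDyadic (q - (1 / 2) ^ (n + 1)) ∧ level (q - (1 / 2) ^ (n + 1)) ≤ n := by
  have := (isDyadic_neg.mpr hq).level_add_half_pow_le (by rwa [level_neg])
  rwa [show -q + (1 / 2) ^ (n + 1) = -(q - (1 / 2) ^ (n + 1)) by ring, isDyadic_neg,
    level_neg] at this

end Level

section Paths

variable {q z z' u v w : ℚ} {n : ℕ}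

lemma rnb_of_level_eq_zero (h : level q = 0) : rnb q = q := if_pos h

lemma rnb_of_level_eq_succ (h : level q = n + 1) : rnb q = q + (1 / 2) ^ (n + 1) := by
  simp only [rnb, h, if_neg (Nat.succ_ne_zero n)]

lemma lnb_neg (q : ℚ) : lnb (-q) = -rnb q := by
  unfold lnb rnb
  rw [level_neg]
  split_ifs <;> ring

lemma lnb_iterate_neg (n : ℕ) (q : ℚ) : lnb^[n] (-q) = -rnb^[n] q :=
  (Function.Semiconj.iterate_right (f := Neg.neg) (fun q => (lnb_neg q).symm) n q).symm

lemma IsDyadic.rnb_window (hw : IsDyadic w) (hzw : z ≤ w) (hwz : w - (1 / 2) ^ level w < z) :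
    IsDyadic (rnb w) ∧ z ≤ rnb w ∧ rnb w - (1 / 2) ^ level (rnb w) < z := by
  cases hl : level w with
  | zero => rw [rnb_of_level_eq_zero hl]; exact ⟨hw, hzw, hl ▸ hwz⟩
  | succ n =>
    obtain ⟨hd, hlev⟩ := hw.level_add_half_pow_le hl
    have hmono : (1 / 2 : ℚ) ^ n ≤ (1 / 2) ^ level (w + (1 / 2) ^ (n + 1)) :=
      pow_le_pow_of_le_one (by norm_num) (by norm_num) hlev
    have hpos : (0 : ℚ) < (1 / 2) ^ (n + 1) := by positivity
    rw [hl] at hwz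
    rw [rnb_of_level_eq_succ hl]
    exact ⟨hd, by linarith, by linarith [pow_succ (1 / 2 : ℚ) n]⟩

lemma IsDyadic.rnb_iterate_window (hz : IsDyadic z) (i : ℕ) :
    IsDyadic (rnb^[i] z) ∧ z ≤ rnb^[i] z ∧ rnb^[i] z - (1 / 2) ^ level (rnb^[i] z) < z := by
  induction i with
  | zero => exact ⟨hz, le_rfl, sub_lt_self z (by positivity)⟩
  | succ i ih =>
    rw [Function.iterate_succ_apply']
    exact ih.1.rnb_window ih.2.1 ih.2.2

lemma IsDyadic.exists_rnb_iterate_eq (hz : IsDyadic z) (hw : IsDyadic w) (hzw : z ≤ w)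
    (hwz : w - (1 / 2) ^ level w < z) : ∃ i, rnb^[i] z = w := by
  induction hl : level z using Nat.strong_induction_on generalizing z with
  | _ N ih =>
    rcases hzw.eq_or_lt with rfl | hlt
    · exact ⟨0, rfl⟩
    have hlevel : level w < level z := by
      by_contra! h
      have := hz.add_half_pow_le hw hlt h le_rfl
      linarith
    obtain ⟨n, hn⟩ := Nat.exists_eq_add_one_of_ne_zero (n := level z) (by omega)
    obtain ⟨hd, hlev⟩ := hz.level_add_half_pow_le hn
    have hstep := hz.add_half_pow_le hw hlt hn.le (by omega)
    have hpos : (0 : ℚ) < (1 / 2) ^ (n + 1) := by positivity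
    obtain ⟨i, hi⟩ := ih _ (by omega) hd hstep (by linarith) rfl
    exact ⟨i + 1, by rw [Function.iterate_succ_apply, rnb_of_level_eq_succ hn, hi]⟩

theorem exists_rnb_iterate_eq_iff (hz : IsDyadic z) :
    (∃ i, w = rnb^[i] z) ↔ IsDyadic w ∧ z ≤ w ∧ w - (1 / 2) ^ level w < z := by
  constructor
  · rintro ⟨i, rfl⟩
    exact hz.rnb_iterate_window i
  · rintro ⟨hw, hzw, hwz⟩
    obtain ⟨i, hi⟩ := hz.exists_rnb_iterate_eq hw hzw hwz
    exact ⟨i, hi.symm⟩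

theorem exists_lnb_iterate_eq_iff (hz' : IsDyadic z') :
    (∃ j, w = lnb^[j] z') ↔ IsDyadic w ∧ w ≤ z' ∧ z' < w + (1 / 2) ^ level w := by
  calc (∃ j, w = lnb^[j] z') ↔ ∃ j, -w = rnb^[j] (-z') := by
        refine exists_congr fun j => ?_
        rw [← neg_neg z', lnb_iterate_neg, neg_neg, neg_eq_iff_eq_neg]
    _ ↔ IsDyadic (-w) ∧ -z' ≤ -w ∧ -w - (1 / 2) ^ level (-w) < -z' :=
        exists_rnb_iterate_eq_iff (isDyadic_neg.mpr hz')
    _ ↔ IsDyadic w ∧ w ≤ z' ∧ z' < w + (1 / 2) ^ level w := by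
        rw [isDyadic_neg, level_neg, neg_le_neg_iff]
        exact and_congr_right' (and_congr_right' ⟨fun h => by linarith, fun h => by linarith⟩)

lemma not_lt_of_windows (hu : IsDyadic u) (hv : IsDyadic v) (hzu : z ≤ u)
    (hzu' : z' < u + (1 / 2) ^ level u) (hvz : v - (1 / 2) ^ level v < z) (hvz' : v ≤ z') :
    ¬u < v := by
  intro huv
  rcases le_total (level v) (level u) with h | h
  · linarith [hu.add_half_pow_le hv huv le_rfl h]
  · linarith [hu.add_half_pow_le hv huv h le_rfl]

end Paths

lemma exists_dyadic_windows {z z' : ℚ} (hz : InZ z) (hz' : InZ z') (hle : z ≤ z')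
    (hne : ¬(z = 0 ∧ z' = 1)) :
    ∃ w, (IsDyadic w ∧ z ≤ w ∧ w - (1 / 2) ^ level w < z) ∧
      (IsDyadic w ∧ w ≤ z' ∧ z' < w + (1 / 2) ^ level w) := by
  set S := {w | IsDyadic w ∧ z ≤ w ∧ w ≤ z'}
  have hS : S.Nonempty := ⟨z, hz.2.2, le_rfl, hle⟩
  set w := Function.argminOn level S hS
  obtain ⟨hw, hzw, hwz'⟩ : w ∈ S := Function.argminOn_mem level S hS
  have hmin (v : ℚ) (hv : IsDyadic v) (hlt : level v < level w) : v < z ∨ z' < v := by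
    by_contra! h
    exact Function.not_lt_argminOn level S ⟨hv, h⟩ hlt
  suffices w - (1 / 2) ^ level w < z ∧ z' < w + (1 / 2) ^ level w from
    ⟨w, ⟨hw, hzw, this.1⟩, hw, hwz', this.2⟩
  cases hl : level w with
  | zero =>
    have hz₀ : 0 ≤ z := hz.1
    have hz'₁ : z' ≤ 1 := hz'.2.1
    rw [pow_zero]
    constructor <;> by_contra! h <;> exact hne ⟨by linarith, by linarith⟩
  | succ n =>
    have hpos : (0 : ℚ) < (1 / 2) ^ (n + 1) := by positivity
    obtain ⟨hd₁, hl₁⟩ := hw.level_sub_half_pow_le hl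
    obtain ⟨hd₂, hl₂⟩ := hw.level_add_half_pow_le hl
    constructor
    · exact (hmin _ hd₁ (by omega)).resolve_right (by linarith)
    · exact (hmin _ hd₂ (by omega)).resolve_left (by linarith)

/-- For dyadic rationals `z < z'` in `[0,1]` with `{z,z'} ≠ {0,1}`, the right
path from `z` and the left path from `z'` intersect in a unique point. -/
theorem paths_meet_uniquely (z z' : ℚ) (hz : InZ z) (hz' : InZ z')
    (hlt : z < z') (hne : ¬(z = 0 ∧ z' = 1)) :
    ∃! w : ℚ, (∃ i : ℕ, w = rnb^[i] z) ∧ (∃ j : ℕ, w = lnb^[j] z') := by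
  simp only [exists_rnb_iterate_eq_iff hz.2.2, exists_lnb_iterate_eq_iff hz'.2.2]
  obtain ⟨w, hw⟩ := exists_dyadic_windows hz hz' hlt.le hne
  refine ⟨w, hw, ?_⟩
  rintro v ⟨⟨hv, hzv, hvz⟩, -, hvz', hz'v⟩
  obtain ⟨⟨hw, hzw, hwz⟩, -, hwz', hz'w⟩ := hw
  exact le_antisymm (not_lt.mp (not_lt_of_windows hw hv hzw hz'w hvz hvz'))
    (not_lt.mp (not_lt_of_windows hv hw hzv hz'v hwz hwz'))
end

section
/- Fix a ∈ (0,1/2) and let ρ be the V-path quasi-metric on the dyadic rationals of [0,1] with edge lengths a^{ℓ(w)}. For every n ≥ 1 and 0 ≤ i < 2^n, ρ(i/2^n, (i+1)/2^n) = a^n; consequently the chain 0, 1/2^n, 2/2^n, …, 1 has total ρ-length 2^n a^n, which tends to 0 as n → ∞. Hence the chain-construction distance d(0,1) = 0, and the chain approach does not yield a metric. -/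
/-- `ρ` is the V-path quasi-metric on the dyadic rationals of `[0,1]` with
parameter `a`: it is symmetric, vanishes on the diagonal, is nonnegative on
`Z`, satisfies `ρ(0,1) = 1`, and decomposes along the unique V-shaped path:
for `z < z'` in `Z` the first edge taken from the higher-level endpoint has
length `a^level`. These properties characterize the sum of edge lengths
`a^{ℓ(w)}` along the V-shaped path joining `z` and `z'`. -/
def IsVPath (a : ℝ) (ρ : ℚ → ℚ → ℝ) : Prop :=
  (∀ z z', ρ z z' = ρ z' z) ∧
  (∀ z, ρ z z = 0) ∧
  (∀ z z', InZ z → InZ z' → 0 ≤ ρ z z') ∧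
  ρ 0 1 = 1 ∧
  (∀ z z', InZ z → InZ z' → z < z' → 1 ≤ level z → level z' ≤ level z →
    ρ z z' = a ^ level z + ρ (rnb z) z') ∧
  (∀ z z', InZ z → InZ z' → z < z' → level z < level z' →
    ρ z z' = ρ z (lnb z') + a ^ level z')

/-- `τ_n = a + a² + ⋯ + a^{n-1} + 2 a^n`. -/
noncomputable def tau (a : ℝ) (n : ℕ) : ℝ :=
  (∑ i ∈ Finset.Ico 1 n, a ^ i) + 2 * a ^ n

lemma InZ_zero : InZ 0 := ⟨le_refl 0, zero_le_one, 0, 0, by norm_num⟩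

lemma InZ_one : InZ 1 := ⟨zero_le_one, le_refl 1, 1, 0, by norm_num⟩

/-!
Between consecutive grid points `i/2^n` and `(i+1)/2^n` exactly one has level `n` (the one
with odd numerator), and the other one is its neighbour, so the V-path between them is a
single edge of length `a^n`. The grid chain from `0` to `1` therefore has length
`2^n a^n = (2a)^n`, which tends to `0` because `a < 1/2`; as `ρ ≥ 0` on `Z`, the chain
distance `d(0,1)` vanishes.
-/

section ChainDist

variable {X : Type*} {ρ : X → X → ℝ}

lemma chainDist_nonneg (hρ : ∀ x y, 0 ≤ ρ x y) (z z' : X) : 0 ≤ chainDist ρ z z' := by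
  refine Real.sInf_nonneg ?_
  rintro s ⟨n, f, -, -, rfl⟩
  exact Finset.sum_nonneg fun i _ => hρ (f i) (f (i + 1))

lemma chainDist_le_sum (hρ : ∀ x y, 0 ≤ ρ x y) (n : ℕ) (f : ℕ → X) :
    chainDist ρ (f 0) (f (n + 1)) ≤ ∑ i ∈ Finset.range (n + 1), ρ (f i) (f (i + 1)) := by
  refine csInf_le ⟨0, ?_⟩ ⟨n, f, rfl, rfl, rfl⟩
  rintro s ⟨m, g, -, -, rfl⟩
  exact Finset.sum_nonneg fun i _ => hρ (g i) (g (i + 1))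

end ChainDist

lemma level_intCast_div_le (k : ℤ) (n : ℕ) : level ((k : ℚ) / 2 ^ n) ≤ n :=
  Nat.sInf_le ⟨k, rfl⟩

lemma not_odd_of_intCast_div_eq {k j : ℤ} {m n : ℕ} (hmn : m < n)
    (h : (k : ℚ) / 2 ^ n = (j : ℚ) / 2 ^ m) : ¬ Odd k := by
  have hq : (k : ℚ) * 2 ^ m = (j * 2 ^ (n - m)) * 2 ^ m := by
    rw [div_eq_div_iff (by positivity) (by positivity)] at h
    rw [h, mul_assoc, ← pow_add, Nat.sub_add_cancel hmn.le]
  have hk : k = j * 2 ^ (n - m) := by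
    exact_mod_cast mul_right_cancel₀ (pow_ne_zero m two_ne_zero) hq
  rw [hk, Int.not_odd_iff_even]
  exact (Int.even_pow.mpr ⟨even_two, by omega⟩).mul_left j

lemma level_odd_div_two_pow {k : ℤ} (hk : Odd k) (n : ℕ) : level ((k : ℚ) / 2 ^ n) = n := by
  refine le_antisymm (level_intCast_div_le k n) (not_lt.mp fun hlt => ?_)
  obtain ⟨j, hj⟩ := Nat.sInf_mem (⟨n, k, rfl⟩ :
    {m : ℕ | ∃ j : ℤ, (k : ℚ) / 2 ^ n = (j : ℚ) / 2 ^ m}.Nonempty)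
  exact not_odd_of_intCast_div_eq hlt hj hk

lemma level_even_div_two_pow {k : ℤ} (hk : Even k) {n : ℕ} (hn : 1 ≤ n) :
    level ((k : ℚ) / 2 ^ n) < n := by
  obtain ⟨t, rfl⟩ := hk
  have h : ((t + t : ℤ) : ℚ) / 2 ^ n = (t : ℚ) / 2 ^ (n - 1) := by
    rw [← Nat.sub_add_cancel hn, pow_succ, Nat.add_sub_cancel]
    push_cast
    field_simp
    ring
  rw [h]
  exact (level_intCast_div_le t (n - 1)).trans_lt (by omega)

lemma lnb_eq_of_level_eq {q : ℚ} {n : ℕ} (hn : 1 ≤ n) (hq : level q = n) : lnb q = q - 1 / 2 ^ n := by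
  rw [lnb, hq, if_neg (by omega), div_pow, one_pow]

lemma rnb_eq_of_level_eq {q : ℚ} {n : ℕ} (hn : 1 ≤ n) (hq : level q = n) : rnb q = q + 1 / 2 ^ n := by
  rw [rnb, hq, if_neg (by omega), div_pow, one_pow]

lemma InZ_natCast_div_two_pow {i n : ℕ} (hi : i ≤ 2 ^ n) : InZ ((i : ℚ) / 2 ^ n) := by
  refine ⟨by positivity, ?_, i, n, rfl⟩
  rw [div_le_one (by positivity)]
  exact_mod_cast hi

lemma IsVPath.rho_nonneg {a : ℝ} {ρ : ℚ → ℚ → ℝ} (hρ : IsVPath a ρ) (x y : {q : ℚ // InZ q}) :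
    0 ≤ ρ x.1 y.1 :=
  hρ.2.2.1 _ _ x.2 y.2

lemma IsVPath.rho_consecutive {a : ℝ} {ρ : ℚ → ℚ → ℝ} (hρ : IsVPath a ρ) {n : ℕ} (hn : 1 ≤ n)
    {i : ℕ} (hi : i < 2 ^ n) : ρ ((i : ℚ) / 2 ^ n) (((i : ℚ) + 1) / 2 ^ n) = a ^ n := by
  obtain ⟨-, hdiag, -, -, hR, hL⟩ := hρ
  have hz : InZ ((i : ℚ) / 2 ^ n) := InZ_natCast_div_two_pow hi.le
  have hz' : InZ (((i : ℚ) + 1) / 2 ^ n) := by exact_mod_cast InZ_natCast_div_two_pow hi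
  have hlt : (i : ℚ) / 2 ^ n < ((i : ℚ) + 1) / 2 ^ n := by gcongr; linarith
  have hcast : ((i : ℚ) + 1) = ((i + 1 : ℤ) : ℚ) := by push_cast; rfl
  rcases Nat.even_or_odd i with hev | hodd
  · have hlev' : level (((i : ℚ) + 1) / 2 ^ n) = n := by
      rw [hcast]; exact level_odd_div_two_pow (by exact_mod_cast hev.add_one) n
    have hlev : level ((i : ℚ) / 2 ^ n) < n := by
      simpa using level_even_div_two_pow (k := i) (by exact_mod_cast hev) hn
    rw [hL _ _ hz hz' hlt (hlev'.symm ▸ hlev), lnb_eq_of_level_eq hn hlev', hlev', add_div,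
      add_sub_cancel_right, hdiag, zero_add]
  · have hlev : level ((i : ℚ) / 2 ^ n) = n := by
      simpa using level_odd_div_two_pow (k := i) (by exact_mod_cast hodd) n
    have hlev' : level (((i : ℚ) + 1) / 2 ^ n) ≤ n := by
      rw [hcast]; exact level_intCast_div_le _ n
    rw [hR _ _ hz hz' hlt (hlev.symm ▸ hn) (hlev.symm ▸ hlev'), rnb_eq_of_level_eq hn hlev, hlev,
      ← add_div, hdiag, add_zero]

lemma IsVPath.chainDist_zero_one_le {a : ℝ} {ρ : ℚ → ℚ → ℝ} (hρ : IsVPath a ρ) {n : ℕ}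
    (hn : 1 ≤ n) :
    chainDist (fun x y : {q : ℚ // InZ q} => ρ x.1 y.1) ⟨0, InZ_zero⟩ ⟨1, InZ_one⟩ ≤
      2 ^ n * a ^ n := by
  obtain ⟨k, hk⟩ := Nat.exists_eq_add_one_of_ne_zero (pow_ne_zero n two_ne_zero)
  let grid : ℕ → {q : ℚ // InZ q} := fun i =>
    ⟨(min i (2 ^ n) : ℕ) / 2 ^ n, InZ_natCast_div_two_pow (min_le_right _ _)⟩
  have h0 : grid 0 = ⟨0, InZ_zero⟩ := by simp [grid]
  have h1 : grid (k + 1) = ⟨1, InZ_one⟩ := by simp [grid, ← hk]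
  have hstep : ∀ i ∈ Finset.range (k + 1), ρ (grid i).1 (grid (i + 1)).1 = a ^ n := by
    intro i hi
    rw [Finset.mem_range, ← hk] at hi
    simp only [grid, min_eq_left hi.le, min_eq_left (Nat.succ_le_of_lt hi), Nat.cast_succ]
    exact hρ.rho_consecutive hn hi
  calc _ = chainDist (fun x y : {q : ℚ // InZ q} => ρ x.1 y.1) (grid 0) (grid (k + 1)) := by
          rw [h0, h1]
    _ ≤ ∑ i ∈ Finset.range (k + 1), ρ (grid i).1 (grid (i + 1)).1 :=
          chainDist_le_sum hρ.rho_nonneg k grid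
    _ = 2 ^ n * a ^ n := by
          rw [Finset.sum_congr rfl hstep, Finset.sum_const, Finset.card_range, nsmul_eq_mul, ← hk]
          push_cast; rfl

/-- Consecutive points `i/2^n, (i+1)/2^n` have `ρ`-distance `a^n`; the chain
`0, 1/2^n, …, 1` has total length `2^n a^n → 0`, hence the chain construction
gives `d(0,1) = 0` even though `0 ≠ 1`: the chain approach fails. -/
theorem chain_approach_fails (a : ℝ) (ha0 : 0 < a) (ha : a < 1 / 2)
    (ρ : ℚ → ℚ → ℝ) (hρ : IsVPath a ρ) :
    (∀ n : ℕ, 1 ≤ n → ∀ i : ℕ, i < 2 ^ n →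
      ρ ((i : ℚ) / 2 ^ n) (((i : ℚ) + 1) / 2 ^ n) = a ^ n) ∧
    Filter.Tendsto (fun n : ℕ => (2 : ℝ) ^ n * a ^ n) Filter.atTop (nhds 0) ∧
    chainDist (fun x y : {q : ℚ // InZ q} => ρ x.1 y.1)
      ⟨0, InZ_zero⟩ ⟨1, InZ_one⟩ = 0 ∧
    (0 : ℚ) ≠ 1 := by
  have htend : Filter.Tendsto (fun n : ℕ => (2 : ℝ) ^ n * a ^ n) Filter.atTop (nhds 0) := by
    simp_rw [← mul_pow]
    exact tendsto_pow_atTop_nhds_zero_of_lt_one (by linarith) (by linarith)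
  refine ⟨fun n hn i hi => hρ.rho_consecutive hn hi, htend, le_antisymm ?_ ?_, zero_ne_one⟩
  · exact ge_of_tendsto htend (Filter.eventually_ge_atTop 1 |>.mono fun n hn =>
      hρ.chainDist_zero_one_le hn)
  · exact chainDist_nonneg hρ.rho_nonneg _ _
end

section
/- For every K > 2 there exists a set Z and a K-quasi-metric ρ on Z such that the chain-construction function d(z,z') = inf over finite chains of Σ ρ(z_i, z_{i+1}) is not a metric: there exist z ≠ z' with d(z,z') = 0. -/
/-- For every `K > 2` there is a `K`-quasi-metric space on which the chain
construction fails to be a metric: two distinct points at chain-distance `0`. -/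
theorem chain_approach_fails_for_large_K :
    ∀ K : ℝ, 2 < K → ∃ (Z : Type) (ρ : Z → Z → ℝ),
      IsQuasiMetric K ρ ∧ ∃ z z' : Z, z ≠ z' ∧ chainDist ρ z z' = 0 := by
  intro K hK
  set α : ℝ := Real.logb 2 K with hα
  have hK0 : (0:ℝ) < K := by linarith
  have hα1 : 1 < α := by
    rw [hα, show (1:ℝ) = Real.logb 2 2 by simp]
    exact Real.logb_lt_logb (by norm_num) (by norm_num) hK
  have hα0 : 0 < α := by linarith
  have h2α : (2:ℝ) ^ α = K := Real.rpow_logb (by norm_num) (by norm_num) hK0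
  refine ⟨ℝ, fun x y => |x - y| ^ α, ⟨?_, ?_, ?_, ?_⟩, 0, 1, by norm_num, ?_⟩
  · intro z z'; positivity
  · intro z z'
    rw [Real.rpow_eq_zero (abs_nonneg _) (by linarith)]
    constructor
    · intro h; have := abs_eq_zero.mp h; linarith
    · intro h; simp [h]
  · intro z z'; show |z - z'| ^ α = |z' - z| ^ α; rw [abs_sub_comm]
  · intro x y z
    have h1 : |x - z| ≤ 2 * max |x - y| |y - z| := by
      have := abs_sub_le x y z
      have h2 : |x - y| ≤ max |x - y| |y - z| := le_max_left _ _
      have h3 : |y - z| ≤ max |x - y| |y - z| := le_max_right _ _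
      linarith
    calc |x - z| ^ α ≤ (2 * max |x - y| |y - z|) ^ α :=
          Real.rpow_le_rpow (abs_nonneg _) h1 (le_of_lt hα0)
      _ = 2 ^ α * (max |x - y| |y - z|) ^ α := by
          rw [Real.mul_rpow (by norm_num) (le_max_iff.mpr (Or.inl (abs_nonneg _)))]
      _ = K * max (|x - y| ^ α) (|y - z| ^ α) := by
          rw [h2α]
          congr 1
          rcases le_total |x - y| |y - z| with h | h
          · rw [max_eq_right h, max_eq_right
              (Real.rpow_le_rpow (abs_nonneg _) h (le_of_lt hα0))]
          · rw [max_eq_left h, max_eq_left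
              (Real.rpow_le_rpow (abs_nonneg _) h (le_of_lt hα0))]
  · -- chainDist = 0
    set S : Set ℝ := {s : ℝ | ∃ (n : ℕ) (f : ℕ → ℝ), f 0 = 0 ∧ f (n + 1) = 1 ∧
      s = ∑ i ∈ Finset.range (n + 1), |f i - f (i + 1)| ^ α} with hS
    have hnonneg : ∀ s ∈ S, 0 ≤ s := by
      rintro s ⟨n, f, -, -, rfl⟩
      exact Finset.sum_nonneg fun i _ => Real.rpow_nonneg (abs_nonneg _) _
    have hbdd : BddBelow S := ⟨0, hnonneg⟩
    -- for each n, the uniform chain gives (n+1)^(1-α)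
    have hmem : ∀ n : ℕ, ((n:ℝ) + 1) ^ (1 - α) ∈ S := by
      intro n
      refine ⟨n, fun i => (i : ℝ) / ((n : ℝ) + 1), by simp, ?_, ?_⟩
      · push_cast
        field_simp
      · have hN : (0:ℝ) < (n:ℝ) + 1 := by positivity
        have hterm : ∀ i ∈ Finset.range (n + 1),
            |(i:ℝ) / ((n:ℝ)+1) - ((i:ℝ)+1) / ((n:ℝ)+1)| ^ α = (((n:ℝ)+1)⁻¹) ^ α := by
          intro i _
          congr 1
          rw [div_sub_div_same, abs_div]
          simp [abs_of_pos hN]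
        calc ((n:ℝ) + 1) ^ (1 - α)
            = ((n:ℝ)+1) ^ (1:ℝ) * ((n:ℝ)+1) ^ (-α) := by
              rw [← Real.rpow_add hN]; ring_nf
          _ = ((n:ℝ)+1) * (((n:ℝ)+1)⁻¹) ^ α := by
              rw [Real.rpow_one, Real.rpow_neg (le_of_lt hN), Real.inv_rpow (le_of_lt hN)]
          _ = ∑ i ∈ Finset.range (n + 1),
                |(i:ℝ) / ((n:ℝ)+1) - (((i:ℝ)+1)) / ((n:ℝ)+1)| ^ α := by
              rw [Finset.sum_congr rfl hterm, Finset.sum_const, Finset.card_range,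
                nsmul_eq_mul]
              push_cast; ring
          _ = ∑ i ∈ Finset.range (n + 1),
                |(i:ℝ) / ((n:ℝ)+1) - ((i+1 : ℕ):ℝ) / ((n:ℝ)+1)| ^ α := by
              push_cast; rfl
    have hle : ∀ n : ℕ, sInf S ≤ ((n:ℝ) + 1) ^ (1 - α) :=
      fun n => csInf_le hbdd (hmem n)
    have htend : Filter.Tendsto (fun n : ℕ => ((n:ℝ) + 1) ^ (1 - α))
        Filter.atTop (nhds 0) := by
      have h1 : Filter.Tendsto (fun n : ℕ => (n:ℝ) + 1) Filter.atTop Filter.atTop :=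
        Filter.tendsto_atTop_add_const_right _ 1 tendsto_natCast_atTop_atTop
      have h2 : Filter.Tendsto (fun x : ℝ => x ^ (1 - α)) Filter.atTop (nhds 0) := by
        have := tendsto_rpow_neg_atTop (y := α - 1) (by linarith)
        convert this using 2 with x
        ring_nf
      exact h2.comp h1
    have hinf_le : sInf S ≤ 0 :=
      ge_of_tendsto htend (Filter.Eventually.of_forall hle)
    have hinf_ge : 0 ≤ sInf S := le_csInf ⟨_, hmem 0⟩ hnonneg
    show sInf _ = 0
    have : S = {s : ℝ | ∃ (n : ℕ) (f : ℕ → ℝ), f 0 = 0 ∧ f (n + 1) = 1 ∧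
      s = ∑ i ∈ Finset.range (n + 1), |f i - f (i + 1)| ^ α} := hS
    linarith [hinf_le, hinf_ge]
end
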